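/- Conditional independence implies zero marginal payout for the standard conditional-expectation game: fix j ∈ Fin d and S ⊆ Fin d with j ∉ S, and suppose p(y | x_{S∪{j}}) = p(y | x_S) for all x ∈ X and y ∈ Y. Let w : Y → ℝ be any real-valued outcome function, define the regression function f(x) := Σ_y w(y) · p(y|x) and the value function v_0(T, x) := Σ_{x' : x'_T = x_T} P(x' | x_T) · f(x') for T ⊆ Fin d. Then v_0(S ∪ {j}, x) = v_0(S, x) for every x ∈ X. -/

import Mathlib

open Finset Real

noncomputable section

/-- Conditional pmf `p(y | x_S)` in the finite discrete setting. -/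
def condP {d : ℕ} {Xf : Fin d → Type*} {Y : Type*} [∀ j, Fintype (Xf j)] [Fintype Y]
    [∀ j, DecidableEq (Xf j)]
    (p : ((∀ j, Xf j) × Y) → ℝ) (S : Finset (Fin d)) (x : ∀ j, Xf j) (y : Y) : ℝ :=
  (∑ x' : ∀ j, Xf j, if ∀ j ∈ S, x' j = x j then p (x', y) else 0) /
  (∑ x' : ∀ j, Xf j, if ∀ j ∈ S, x' j = x j then ∑ y' : Y, p (x', y') else 0)

/-- Marginal feature pmf `P(x)`. -/
def margP {d : ℕ} {Xf : Fin d → Type*} {Y : Type*} [Fintype Y]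
    (p : ((∀ j, Xf j) × Y) → ℝ) (x : ∀ j, Xf j) : ℝ :=
  ∑ y : Y, p (x, y)

/-- Local conditional entropy `H(Y | x_S)`. -/
def entY {d : ℕ} {Xf : Fin d → Type*} {Y : Type*} [∀ j, Fintype (Xf j)] [Fintype Y]
    [∀ j, DecidableEq (Xf j)]
    (p : ((∀ j, Xf j) × Y) → ℝ) (S : Finset (Fin d)) (x : ∀ j, Xf j) : ℝ :=
  -∑ y : Y, condP p S x y * Real.log (condP p S x y)

/-- The KL-divergence game `v_KL(S, x) = -D_KL(p(Y|x) ‖ p(Y|x_S))`. -/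
def vKL {d : ℕ} {Xf : Fin d → Type*} {Y : Type*} [∀ j, Fintype (Xf j)] [Fintype Y]
    [∀ j, DecidableEq (Xf j)]
    (p : ((∀ j, Xf j) × Y) → ℝ) (S : Finset (Fin d)) (x : ∀ j, Xf j) : ℝ :=
  -∑ y : Y, condP p Finset.univ x y *
      Real.log (condP p Finset.univ x y / condP p S x y)

/-- The cross-entropy game `v_CE(S, x) = -H(p(Y|x), p(Y|x_S))`. -/
def vCE {d : ℕ} {Xf : Fin d → Type*} {Y : Type*} [∀ j, Fintype (Xf j)] [Fintype Y]
    [∀ j, DecidableEq (Xf j)]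
    (p : ((∀ j, Xf j) × Y) → ℝ) (S : Finset (Fin d)) (x : ∀ j, Xf j) : ℝ :=
  ∑ y : Y, condP p Finset.univ x y * Real.log (condP p S x y)

/-- The information-gain game `v_IG(S, x) = -H(Y | x_S)`. -/
def vIG {d : ℕ} {Xf : Fin d → Type*} {Y : Type*} [∀ j, Fintype (Xf j)] [Fintype Y]
    [∀ j, DecidableEq (Xf j)]
    (p : ((∀ j, Xf j) × Y) → ℝ) (S : Finset (Fin d)) (x : ∀ j, Xf j) : ℝ :=
  -entY p S x

/-- The local entropy game `v_H(S, x) = H(Y | x_S)`. -/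
def vH {d : ℕ} {Xf : Fin d → Type*} {Y : Type*} [∀ j, Fintype (Xf j)] [Fintype Y]
    [∀ j, DecidableEq (Xf j)]
    (p : ((∀ j, Xf j) × Y) → ℝ) (S : Finset (Fin d)) (x : ∀ j, Xf j) : ℝ :=
  entY p S x

/-- The marginalized entropy game
`v_{H*}(S, x) = E[H(Y | x') | x'_S = x_S] = ∑_{x' : x'_S = x_S} P(x' | x_S) H(Y|x')`. -/
def vHstar {d : ℕ} {Xf : Fin d → Type*} {Y : Type*} [∀ j, Fintype (Xf j)] [Fintype Y]
    [∀ j, DecidableEq (Xf j)]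
    (p : ((∀ j, Xf j) × Y) → ℝ) (S : Finset (Fin d)) (x : ∀ j, Xf j) : ℝ :=
  ∑ x' : ∀ j, Xf j,
    if ∀ j ∈ S, x' j = x j then
      (margP p x' /
          ∑ x'' : ∀ j, Xf j, if ∀ j ∈ S, x'' j = x j then margP p x'' else 0) *
        entY p Finset.univ x'
    else 0

/-- The Shapley value `φ_v(j, x)` of feature `j` at point `x` for the game `v`. -/
def shapley {d : ℕ} {X : Type*} (v : Finset (Fin d) → X → ℝ) (j : Fin d) (x : X) : ℝ :=
  ∑ S ∈ (Finset.univ.erase j).powerset,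
    ((S.card.factorial : ℝ) * ((d - S.card - 1).factorial : ℝ) / (d.factorial : ℝ)) *
      (v (insert j S) x - v S x)

/-- The standard conditional-expectation game
`v_0(T, x) = ∑_{x' : x'_T = x_T} P(x' | x_T) · f(x')` where
`f(x') = ∑_y w(y) p(y | x')` is the regression function. -/
def vZero {d : ℕ} {Xf : Fin d → Type*} {Y : Type*} [∀ j, Fintype (Xf j)] [Fintype Y]
    [∀ j, DecidableEq (Xf j)]
    (p : ((∀ j, Xf j) × Y) → ℝ) (w : Y → ℝ) (T : Finset (Fin d)) (x : ∀ j, Xf j) : ℝ :=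
  ∑ x' : ∀ j, Xf j,
    if ∀ j ∈ T, x' j = x j then
      (margP p x' /
          ∑ x'' : ∀ j, Xf j, if ∀ j ∈ T, x'' j = x j then margP p x'' else 0) *
        ∑ y : Y, w y * condP p Finset.univ x' y
    else 0

/-!
Tower property: since `p(y | x') = p(x', y) / P(x')`, the weights `P(x' | x_T)` cancel the
marginal, and `v_0(T, x) = ∑_y w(y) p(y | x_T)`. Conditional independence then makes the two
sums over `y` agree term by term.
-/

section

variable {d : ℕ} {Xf : Fin d → Type*} {Y : Type*} [∀ j, Fintype (Xf j)] [∀ j, DecidableEq (Xf j)]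
  [Fintype Y]

lemma sum_ite_forall_mem_univ_eq {M : Type*} [AddCommMonoid M] (g : (∀ j, Xf j) → M)
    (x : ∀ j, Xf j) :
    (∑ x' : ∀ j, Xf j, if ∀ j ∈ (univ : Finset (Fin d)), x' j = x j then g x' else 0) = g x := by
  simp [← funext_iff]

lemma condP_univ (p : ((∀ j, Xf j) × Y) → ℝ) (x : ∀ j, Xf j) (y : Y) :
    condP p univ x y = p (x, y) / margP p x := by
  rw [condP, sum_ite_forall_mem_univ_eq, sum_ite_forall_mem_univ_eq, margP]

omit [∀ j, Fintype (Xf j)] [∀ j, DecidableEq (Xf j)] in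
lemma margP_pos [Nonempty Y] {p : ((∀ j, Xf j) × Y) → ℝ} (hpos : ∀ z, 0 < p z)
    (x : ∀ j, Xf j) : 0 < margP p x :=
  sum_pos (fun y _ => hpos (x, y)) univ_nonempty

lemma vZero_eq_sum_mul_condP {p : ((∀ j, Xf j) × Y) → ℝ} (hP : ∀ x, margP p x ≠ 0)
    (w : Y → ℝ) (T : Finset (Fin d)) (x : ∀ j, Xf j) :
    vZero p w T x = ∑ y : Y, w y * condP p T x y := by
  set N := ∑ x' : ∀ j, Xf j, if ∀ j ∈ T, x' j = x j then margP p x' else 0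
  have hterm : ∀ x' : ∀ j, Xf j,
      (if ∀ j ∈ T, x' j = x j then margP p x' / N * ∑ y, w y * condP p univ x' y else 0)
        = ∑ y, (if ∀ j ∈ T, x' j = x j then w y * p (x', y) else 0) / N := by
    intro x'
    split_ifs
    · simp only [condP_univ, mul_sum]
      refine Finset.sum_congr rfl fun y _ => ?_
      field_simp [hP x']
    · simp only [zero_div, sum_const_zero]
  calc vZero p w T x
      = ∑ y, ∑ x' : ∀ j, Xf j, (if ∀ j ∈ T, x' j = x j then w y * p (x', y) else 0) / N := by
        rw [vZero, sum_congr rfl fun x' _ => hterm x', sum_comm]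
    _ = ∑ y : Y, w y * condP p T x y := by
        refine sum_congr rfl fun y _ => ?_
        simp only [condP, ← sum_div, mul_div_assoc', mul_sum, mul_ite, mul_zero]
        rfl

end

theorem cond_indep_implies_zero_marginal_v0_general {d : ℕ} {Xf : Fin d → Type*} {Y : Type*}
    [∀ j, Fintype (Xf j)] [∀ j, DecidableEq (Xf j)]
    [Fintype Y] [Nonempty Y]
    (p : ((∀ j, Xf j) × Y) → ℝ)
    (hpos : ∀ z : ((∀ j, Xf j) × Y), 0 < p z)
    (j : Fin d) (S : Finset (Fin d))
    (hci : ∀ (x : ∀ j, Xf j) (y : Y), condP p (insert j S) x y = condP p S x y)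
    (w : Y → ℝ) (x : ∀ j, Xf j) :
    vZero p w (insert j S) x = vZero p w S x := by
  have hP : ∀ x', margP p x' ≠ 0 := fun x' => (margP_pos hpos x').ne'
  simp only [vZero_eq_sum_mul_condP hP, hci]

/-- conditional independence implies zero marginal payout for the
standard conditional-expectation game. -/
theorem cond_indep_implies_zero_marginal_v0 {d : ℕ} (hd : 1 ≤ d) {Xf : Fin d → Type*} {Y : Type*}
    [∀ j, Fintype (Xf j)] [∀ j, Nonempty (Xf j)] [∀ j, DecidableEq (Xf j)]
    [Fintype Y] [Nonempty Y]
    (p : ((∀ j, Xf j) × Y) → ℝ)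
    (hpos : ∀ z : ((∀ j, Xf j) × Y), 0 < p z)
    (hsum : ∑ z : ((∀ j, Xf j) × Y), p z = 1)
    (j : Fin d) (S : Finset (Fin d)) (hjS : j ∉ S)
    (hci : ∀ (x : ∀ j, Xf j) (y : Y), condP p (insert j S) x y = condP p S x y)
    (w : Y → ℝ) (x : ∀ j, Xf j) :
    vZero p w (insert j S) x = vZero p w S x :=
  cond_indep_implies_zero_marginal_v0_general p hpos j S hci w x
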